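/- arXiv:1610.09028 — 4 statements merged into one kernel-verified Lean document; each statement's English description precedes it below -/
import Mathlib

section
/- Let x ∈ ℝⁿ, g, ξ ∈ ℝⁿ, γ ∈ ℝᵐ with γ ∈ G_ρ (i.e., γ = 1_m + ε with ε ⊥ 1_m and ‖ε‖_∞ ≤ ρ) and g ∈ G_ρ, for some ρ ∈ (0,1). Define Δ_F(ξ,γ) := (1/m)‖ξγᵀ − xgᵀ‖_F² and Δ(ξ,γ) := ‖ξ−x‖² + (‖x‖²/m)‖γ−g‖². Then (1−ρ)·Δ(ξ,γ) ≤ Δ_F(ξ,γ) ≤ (1+2ρ)·Δ(ξ,γ). -/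
open scoped BigOperators

/-- Equivalence of the distances `Δ_F` and `Δ` on `ℝⁿ × G_ρ`:
`(1−ρ)·Δ(ξ,γ) ≤ Δ_F(ξ,γ) ≤ (1+2ρ)·Δ(ξ,γ)`. -/
theorem deltaF_delta_equiv {n m : ℕ} (hm : 0 < m) (ρ : ℝ) (hρ0 : 0 < ρ) (hρ1 : ρ < 1)
    (x ξ : EuclideanSpace ℝ (Fin n)) (g γ : EuclideanSpace ℝ (Fin m))
    (hγsum : ∑ i, (γ i - 1) = 0) (hγinf : ∀ i, |γ i - 1| ≤ ρ)
    (hgsum : ∑ i, (g i - 1) = 0) (hginf : ∀ i, |g i - 1| ≤ ρ) :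
    (1 - ρ) * (‖ξ - x‖ ^ 2 + ‖x‖ ^ 2 / m * ‖γ - g‖ ^ 2)
      ≤ (1 / m) * ∑ j : Fin n, ∑ i : Fin m, (ξ j * γ i - x j * g i) ^ 2 ∧
    (1 / m) * ∑ j : Fin n, ∑ i : Fin m, (ξ j * γ i - x j * g i) ^ 2
      ≤ (1 + 2 * ρ) * (‖ξ - x‖ ^ 2 + ‖x‖ ^ 2 / m * ‖γ - g‖ ^ 2) := by
  have hm' : (0:ℝ) < m := by exact_mod_cast hm
  have hnorm : ∀ (k : ℕ) (v : EuclideanSpace ℝ (Fin k)), ‖v‖ ^ 2 = ∑ i, v i ^ 2 := by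
    intro k v
    rw [EuclideanSpace.norm_eq, Real.sq_sqrt (by positivity)]
    simp [Real.norm_eq_abs, sq_abs]
  set a : Fin n → ℝ := fun j => ξ j - x j with ha
  set b : Fin m → ℝ := fun i => γ i - g i with hb
  set ε : Fin m → ℝ := fun i => γ i - 1 with hε
  set A := ∑ j, a j ^ 2 with hA
  set B := ∑ i, b i ^ 2 with hB
  set X := ∑ j, x j ^ 2 with hX
  set E := ∑ i, ε i ^ 2 with hE
  set c := ∑ j, a j * x j with hc
  set d := ∑ i, ε i * b i with hd
  have hAn : (0:ℝ) ≤ A := Finset.sum_nonneg fun _ _ => sq_nonneg _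
  have hBn : (0:ℝ) ≤ B := Finset.sum_nonneg fun _ _ => sq_nonneg _
  have hXn : (0:ℝ) ≤ X := Finset.sum_nonneg fun _ _ => sq_nonneg _
  have hEn : (0:ℝ) ≤ E := Finset.sum_nonneg fun _ _ => sq_nonneg _
  have hnξx : ‖ξ - x‖ ^ 2 = A := by
    rw [hnorm]; apply Finset.sum_congr rfl; intro j _; simp [ha]
  have hnγg : ‖γ - g‖ ^ 2 = B := by
    rw [hnorm]; apply Finset.sum_congr rfl; intro i _; simp [hb]
  have hnx : ‖x‖ ^ 2 = X := hnorm n x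
  have hbsum : ∑ i, b i = 0 := by
    have h1 : ∑ i, b i = (∑ i, (γ i - 1)) - ∑ i, (g i - 1) := by
      rw [← Finset.sum_sub_distrib]
      apply Finset.sum_congr rfl; intro i _; simp only [hb]; ring
    rw [h1, hγsum, hgsum]; ring
  have hεsum : ∑ i, ε i = 0 := hγsum
  have hΓ : ∑ i, γ i ^ 2 = m + E := by
    have h1 : ∀ i : Fin m, γ i ^ 2 = 1 + 2 * ε i + ε i ^ 2 := by
      intro i; simp only [hε]; ring
    rw [Finset.sum_congr rfl fun i _ => h1 i]
    rw [Finset.sum_add_distrib, Finset.sum_add_distrib, ← Finset.mul_sum, hεsum]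
    simp [hE]
  have hγb : ∑ i, γ i * b i = d := by
    have h1 : ∀ i : Fin m, γ i * b i = b i + ε i * b i := by
      intro i; simp only [hε]; ring
    rw [Finset.sum_congr rfl fun i _ => h1 i, Finset.sum_add_distrib, hbsum, zero_add]
  have hS : ∑ j : Fin n, ∑ i : Fin m, (ξ j * γ i - x j * g i) ^ 2
      = A * (m + E) + 2 * c * d + X * B := by
    have step : ∀ j : Fin n, ∑ i : Fin m, (ξ j * γ i - x j * g i) ^ 2
        = a j ^ 2 * (∑ i, γ i ^ 2) + a j * x j * (2 * ∑ i, γ i * b i) + x j ^ 2 * B := by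
      intro j
      have h2 : ∀ i : Fin m, (ξ j * γ i - x j * g i) ^ 2
          = a j ^ 2 * γ i ^ 2 + 2 * (a j * x j) * (γ i * b i) + x j ^ 2 * b i ^ 2 := by
        intro i; simp only [ha, hb]; ring
      rw [Finset.sum_congr rfl fun i _ => h2 i, Finset.sum_add_distrib,
        Finset.sum_add_distrib, ← Finset.mul_sum, ← Finset.mul_sum, ← Finset.mul_sum, ← hB]
      ring
    rw [Finset.sum_congr rfl fun j _ => step j, Finset.sum_add_distrib, Finset.sum_add_distrib,
      ← Finset.sum_mul, ← Finset.sum_mul, ← Finset.sum_mul, hΓ, hγb, ← hA, ← hc, ← hX]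
    ring
  have hEb : E ≤ m * ρ ^ 2 := by
    calc E ≤ ∑ _i : Fin m, ρ ^ 2 := by
          apply Finset.sum_le_sum; intro i _
          calc ε i ^ 2 = |ε i| ^ 2 := (sq_abs _).symm
            _ ≤ ρ ^ 2 := pow_le_pow_left₀ (abs_nonneg _) (hγinf i) 2
      _ = m * ρ ^ 2 := by simp [Finset.card_univ, mul_comm]
  have hc2 : c ^ 2 ≤ A * X := Finset.sum_mul_sq_le_sq_mul_sq _ _ _
  have hd2 : d ^ 2 ≤ E * B := Finset.sum_mul_sq_le_sq_mul_sq _ _ _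
  rw [hnξx, hnγg, hnx, hS]
  clear_value a b ε A B X E c d
  clear * - hm' hρ0 hρ1 hAn hBn hXn hEn hEb hc2 hd2
  have h5 : c ^ 2 * d ^ 2 ≤ (A * X) * (E * B) :=
    mul_le_mul hc2 hd2 (sq_nonneg d) (mul_nonneg hAn hXn)
  have h6 : (A * X) * (E * B) ≤ (A * X) * ((m * ρ ^ 2) * B) :=
    mul_le_mul_of_nonneg_left (mul_le_mul_of_nonneg_right hEb hBn) (mul_nonneg hAn hXn)
  have hsq : (2 * c * d) ^ 2 ≤ (ρ * (m * A + X * B)) ^ 2 := by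
    nlinarith [sq_nonneg (ρ * (↑m * A - X * B)), h5, h6]
  have hvpos : (0:ℝ) ≤ ρ * (m * A + X * B) := by positivity
  have hcd1 : 2 * c * d ≤ ρ * (m * A + X * B) := by nlinarith [hsq, hvpos]
  have hcd2 : -(ρ * (m * A + X * B)) ≤ 2 * c * d := by nlinarith [hsq, hvpos]
  have hAE : A * E ≤ ρ * (m * A) := by
    have h1 : A * E ≤ A * (m * ρ ^ 2) := mul_le_mul_of_nonneg_left hEb hAn
    have hρρ : ρ ^ 2 ≤ ρ := by nlinarith
    have h2 : A * (m * ρ ^ 2) ≤ A * (m * ρ) :=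
      mul_le_mul_of_nonneg_left (mul_le_mul_of_nonneg_left hρρ hm'.le) hAn
    nlinarith [h1, h2]
  have heq0 : A + X / m * B = 1 / m * (m * A + X * B) := by
    field_simp
  constructor
  · have key : (1 - ρ) * (m * A + X * B) ≤ A * (m + E) + 2 * c * d + X * B := by
      nlinarith [mul_nonneg hAn hEn]
    rw [heq0, show (1 - ρ) * (1 / (m:ℝ) * (m * A + X * B))
      = 1 / m * ((1 - ρ) * (m * A + X * B)) from by ring]
    exact mul_le_mul_of_nonneg_left key (by positivity)
  · have key : A * (m + E) + 2 * c * d + X * B ≤ (1 + 2 * ρ) * (m * A + X * B) := by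
      nlinarith [mul_nonneg (mul_nonneg hρ0.le hXn) hBn]
    rw [heq0, show (1 + 2 * ρ) * (1 / (m:ℝ) * (m * A + X * B))
      = 1 / m * ((1 + 2 * ρ) * (m * A + X * B)) from by ring]
    exact mul_le_mul_of_nonneg_left key (by positivity)
end

section
/- Let x ∈ ℝⁿ with x ≠ 0 and g ∈ ℝᵐ₊ with g ≠ 0 and 1_mᵀ g = m. Define E f(ξ,γ) := (1/2m)(‖ξ‖²‖γ‖² + ‖x‖²‖g‖² − 2(γᵀg)(ξᵀx)) and consider the stationarity system ‖γ‖²ξ − (γᵀg)x = 0 and ‖ξ‖²ε − (ξᵀx)e = 0, where γ = 1_m + ε, g = 1_m + e with ε, e ⊥ 1_m. Then the unique solution with γ ∈ Π₊ᵐ (the set of v ∈ ℝᵐ₊ with 1_mᵀ v = m) is (ξ, γ) = (x, g). -/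
open scoped BigOperators

lemma norm_sq_eucl {k : ℕ} (v : EuclideanSpace ℝ (Fin k)) : ‖v‖ ^ 2 = ∑ i, v i ^ 2 := by
  rw [EuclideanSpace.norm_eq, Real.sq_sqrt (by positivity)]
  simp [sq_abs]

/-- The stationarity system of the expected blind-calibration objective,
`‖γ‖²ξ − (γᵀg)x = 0` and `‖ξ‖²ε − (ξᵀx)e = 0` (with `γ = 1 + ε`, `g = 1 + e`,
`ε, e ⊥ 1`), has `(ξ, γ) = (x, g)` as its unique solution with `γ ∈ Π₊ᵐ`. -/
theorem expected_stationary_point_unique {n m : ℕ} (hm : 0 < m)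
    (x : EuclideanSpace ℝ (Fin n)) (hx : x ≠ 0)
    (g : EuclideanSpace ℝ (Fin m)) (hgpos : ∀ i, 0 < g i)
    (hgsum : ∑ i, g i = (m : ℝ))
    (ξ : EuclideanSpace ℝ (Fin n)) (γ : EuclideanSpace ℝ (Fin m))
    (hγpos : ∀ i, 0 ≤ γ i) (hγsum : ∑ i, γ i = (m : ℝ))
    (heq1 : ∀ j, ‖γ‖ ^ 2 * ξ j - (∑ i, γ i * g i) * x j = 0)
    (heq2 : ∀ i, ‖ξ‖ ^ 2 * (γ i - 1) - (∑ j, ξ j * x j) * (g i - 1) = 0) :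
    ξ = x ∧ γ = g := by
  have hmR : (0:ℝ) < m := by exact_mod_cast hm
  set S := ∑ i, γ i * g i with hSdef
  have hγex : ∃ i, 0 < γ i := by
    by_contra h
    push_neg at h
    have : ∑ i, γ i ≤ 0 := Finset.sum_nonpos (fun i _ => h i)
    rw [hγsum] at this; linarith
  obtain ⟨i0, hi0⟩ := hγex
  have hS : 0 < S :=
    Finset.sum_pos' (fun i _ => mul_nonneg (hγpos i) (hgpos i).le)
      ⟨i0, Finset.mem_univ _, mul_pos hi0 (hgpos i0)⟩
  have hγn : 0 < ‖γ‖ ^ 2 := by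
    rw [norm_sq_eucl]
    exact Finset.sum_pos' (fun i _ => sq_nonneg _) ⟨i0, Finset.mem_univ _, by positivity⟩
  set c := S / ‖γ‖ ^ 2 with hcdef
  have hc : 0 < c := div_pos hS hγn
  have hξ : ∀ j, ξ j = c * x j := by
    intro j
    rw [hcdef, div_mul_eq_mul_div, eq_div_iff hγn.ne']
    have := heq1 j
    linarith
  have hxn : 0 < ‖x‖ ^ 2 := by
    have : ‖x‖ ≠ 0 := norm_ne_zero_iff.mpr hx
    positivity
  have hξn : ‖ξ‖ ^ 2 = c ^ 2 * ‖x‖ ^ 2 := by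
    rw [norm_sq_eucl, norm_sq_eucl, Finset.mul_sum]
    exact Finset.sum_congr rfl fun j _ => by rw [hξ j]; ring
  have hξx : ∑ j, ξ j * x j = c * ‖x‖ ^ 2 := by
    rw [norm_sq_eucl, Finset.mul_sum]
    exact Finset.sum_congr rfl fun j _ => by rw [hξ j]; ring
  have hcγ : ∀ i, c * γ i = c + (g i - 1) := by
    intro i
    have h2 := heq2 i
    rw [hξn, hξx] at h2
    have key : (c * ‖x‖ ^ 2) * (c * (γ i - 1)) = (c * ‖x‖ ^ 2) * (g i - 1) := by
      linear_combination h2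
    have := mul_left_cancel₀ (mul_pos hc hxn).ne' key
    linarith
  set E := ∑ i, (g i - 1) ^ 2 with hEdef
  have hcard : (Finset.univ : Finset (Fin m)).card = m := by simp
  have hsum1 : ∑ i, (g i - 1 : ℝ) = 0 := by
    rw [Finset.sum_sub_distrib, hgsum]
    simp
  have hcS : c * S = c * m + E := by
    calc c * S = ∑ i, (c * γ i) * g i := by
          rw [hSdef, Finset.mul_sum]; exact Finset.sum_congr rfl fun i _ => by ring
      _ = ∑ i, (c * g i + ((g i - 1) ^ 2 + (g i - 1))) := by
          exact Finset.sum_congr rfl fun i _ => by rw [hcγ i]; ring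
      _ = c * (∑ i, g i) + (E + ∑ i, (g i - 1)) := by
          rw [Finset.sum_add_distrib, Finset.sum_add_distrib, Finset.mul_sum]
      _ = c * m + E := by rw [hgsum, hsum1]; ring
  have hN : c ^ 2 * ‖γ‖ ^ 2 = c ^ 2 * m + E := by
    calc c ^ 2 * ‖γ‖ ^ 2 = ∑ i, (c * γ i) ^ 2 := by
          rw [norm_sq_eucl, Finset.mul_sum]; exact Finset.sum_congr rfl fun i _ => by ring
      _ = ∑ i, (c ^ 2 + (2 * c * (g i - 1) + (g i - 1) ^ 2)) := by
          exact Finset.sum_congr rfl fun i _ => by rw [hcγ i]; ring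
      _ = (m : ℝ) * c ^ 2 + (2 * c * ∑ i, (g i - 1) + E) := by
          rw [Finset.sum_add_distrib, Finset.sum_add_distrib, Finset.sum_const, hcard,
            ← Finset.mul_sum]
          push_cast; ring
      _ = c ^ 2 * m + E := by rw [hsum1]; ring
  have hcN : c * ‖γ‖ ^ 2 = S := by
    rw [hcdef]; exact div_mul_cancel₀ S hγn.ne'
  have hc1 : c = 1 := by
    have h1 : c ^ 2 * ‖γ‖ ^ 2 = c * S := by rw [← hcN]; ring
    have h2 : c ^ 2 * m = c * m := by
      rw [hcS] at h1; rw [hN] at h1; linarith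
    have := mul_right_cancel₀ hmR.ne' h2
    nlinarith
  constructor
  · ext j; rw [hξ j, hc1]; ring
  · ext i
    have := hcγ i
    rw [hc1] at this
    linarith
end

section
/- Let x ∈ ℝⁿ, g = 1_m + e with e ⊥ 1_m, ‖e‖ ≤ √m·ρ, ρ ∈ [0,1). Define the symmetric block matrix H := [[‖g‖² I_n, x eᵀ],[e xᵀ, ‖x‖² P]], where P = I_m − (1/m)1_m 1_mᵀ. Then for all vectors u = (u₁,u₂) ∈ ℝⁿ × ℝᵐ with 1_mᵀ u₂ = 0, one has uᵀ H u ≥ (1 − ρ/√(1+ρ²))·(‖g‖²‖u₁‖² + ‖x‖²‖u₂‖²) > 0; in particular H is positive definite on ℝⁿ × 1_m^⊥. -/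
open scoped BigOperators
set_option maxHeartbeats 1000000

lemma inner_sum_eq {k : ℕ} (a b : EuclideanSpace ℝ (Fin k)) :
    (inner ℝ a b : ℝ) = ∑ i, a i * b i := by
  simp [PiLp.inner_apply, RCLike.inner_apply, mul_comm]

/-- Positive definiteness of the expected Hessian block matrix
`H = [[‖g‖²Iₙ, xeᵀ],[exᵀ, ‖x‖²P]]` on `ℝⁿ × 1_m^⊥`:
for `u = (u₁,u₂)` with `1ᵀu₂ = 0`,
`uᵀHu ≥ (1 − ρ/√(1+ρ²))(‖g‖²‖u₁‖² + ‖x‖²‖u₂‖²) > 0`. -/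
theorem expected_hessian_pos_def {n m : ℕ} (hm : 0 < m) (ρ : ℝ)
    (hρ0 : 0 ≤ ρ) (hρ1 : ρ < 1)
    (x : EuclideanSpace ℝ (Fin n)) (hx : x ≠ 0)
    (e g : EuclideanSpace ℝ (Fin m))
    (hesum : ∑ i, e i = 0) (hee : ‖e‖ ≤ Real.sqrt m * ρ)
    (hg : ∀ i, g i = 1 + e i)
    (u1 : EuclideanSpace ℝ (Fin n)) (u2 : EuclideanSpace ℝ (Fin m))
    (hu2 : ∑ i, u2 i = 0) :
    (1 - ρ / Real.sqrt (1 + ρ ^ 2)) * (‖g‖ ^ 2 * ‖u1‖ ^ 2 + ‖x‖ ^ 2 * ‖u2‖ ^ 2)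
      ≤ ‖g‖ ^ 2 * ‖u1‖ ^ 2 + 2 * (∑ j, x j * u1 j) * (∑ i, e i * u2 i)
          + ‖x‖ ^ 2 * ‖u2‖ ^ 2 ∧
    (¬(u1 = 0 ∧ u2 = 0) →
      0 < (1 - ρ / Real.sqrt (1 + ρ ^ 2)) * (‖g‖ ^ 2 * ‖u1‖ ^ 2 + ‖x‖ ^ 2 * ‖u2‖ ^ 2)) := by
  have hs1 : (0:ℝ) < Real.sqrt (1 + ρ ^ 2) := Real.sqrt_pos.2 (by positivity)
  set c : ℝ := ρ / Real.sqrt (1 + ρ ^ 2) with hc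
  have hc0 : 0 ≤ c := div_nonneg hρ0 hs1.le
  have hc1 : c < 1 := by
    rw [hc, div_lt_one hs1]
    have : ρ = Real.sqrt (ρ ^ 2) := (Real.sqrt_sq hρ0).symm
    rw [this]
    exact Real.sqrt_lt_sqrt (by positivity) (by nlinarith [Real.sq_sqrt (by positivity : (0:ℝ) ≤ ρ^2)])
  -- norm of g squared
  have hgsq : ‖g‖ ^ 2 = m + ‖e‖ ^ 2 := by
    have h1 : ‖g‖ ^ 2 = ∑ i, g i ^ 2 := by
      rw [EuclideanSpace.norm_eq, Real.sq_sqrt (by positivity)]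
      simp [sq_abs]
    have h2 : ‖e‖ ^ 2 = ∑ i, e i ^ 2 := by
      rw [EuclideanSpace.norm_eq, Real.sq_sqrt (by positivity)]
      simp [sq_abs]
    rw [h1, h2]
    have : ∀ i, g i ^ 2 = 1 + 2 * e i + e i ^ 2 := fun i => by rw [hg i]; ring
    rw [Finset.sum_congr rfl fun i _ => this i]
    rw [Finset.sum_add_distrib, Finset.sum_add_distrib, ← Finset.mul_sum, hesum]
    simp
  have hesq : ‖e‖ ^ 2 ≤ m * ρ ^ 2 := by
    have := mul_self_le_mul_self (norm_nonneg e) hee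
    have hsm : Real.sqrt m * Real.sqrt m = m := Real.mul_self_sqrt (by positivity)
    nlinarith
  have hgpos : 0 < ‖g‖ ^ 2 := by
    have : (0:ℝ) < m := by exact_mod_cast hm
    nlinarith [sq_nonneg ‖e‖]
  have hgn : 0 < ‖g‖ := by nlinarith [norm_nonneg g]
  -- key: ‖e‖ ≤ c * ‖g‖
  have hkey : ‖e‖ ≤ c * ‖g‖ := by
    rw [hc, div_mul_eq_mul_div, le_div_iff₀ hs1]
    have hboth : (‖e‖ * Real.sqrt (1 + ρ ^ 2)) ^ 2 ≤ (ρ * ‖g‖) ^ 2 := by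
      have hsq : Real.sqrt (1 + ρ ^ 2) ^ 2 = 1 + ρ ^ 2 := Real.sq_sqrt (by positivity)
      have : ‖e‖ ^ 2 * (1 + ρ ^ 2) ≤ ρ ^ 2 * (m + ‖e‖ ^ 2) := by nlinarith
      calc (‖e‖ * Real.sqrt (1 + ρ ^ 2)) ^ 2 = ‖e‖ ^ 2 * (1 + ρ ^ 2) := by rw [mul_pow, hsq]
        _ ≤ ρ ^ 2 * (m + ‖e‖ ^ 2) := this
        _ = (ρ * ‖g‖) ^ 2 := by rw [mul_pow, hgsq]
    have h := Real.sqrt_le_sqrt hboth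
    rwa [Real.sqrt_sq (by positivity), Real.sqrt_sq (by positivity)] at h
  set A := ∑ j, x j * u1 j with hA
  set B := ∑ i, e i * u2 i with hB
  have hAb : |A| ≤ ‖x‖ * ‖u1‖ := by
    rw [hA, ← inner_sum_eq]; exact abs_real_inner_le_norm x u1
  have hBb : |B| ≤ ‖e‖ * ‖u2‖ := by
    rw [hB, ← inner_sum_eq]; exact abs_real_inner_le_norm e u2
  have h1 : -(|A| * |B|) ≤ A * B := by
    have := neg_abs_le (A * B)
    rwa [abs_mul] at this
  have h2 : |A| * |B| ≤ (‖x‖ * ‖u1‖) * (‖e‖ * ‖u2‖) :=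
    mul_le_mul hAb hBb (abs_nonneg _) (by positivity)
  have h3 : (‖x‖ * ‖u1‖) * (‖e‖ * ‖u2‖) ≤ c * ((‖x‖ * ‖u1‖) * (‖g‖ * ‖u2‖)) := by
    have := mul_le_mul_of_nonneg_left hkey (by positivity : (0:ℝ) ≤ ‖x‖ * ‖u1‖ * ‖u2‖)
    nlinarith
  have h4 : 2 * ((‖x‖ * ‖u1‖) * (‖g‖ * ‖u2‖)) ≤ ‖g‖ ^ 2 * ‖u1‖ ^ 2 + ‖x‖ ^ 2 * ‖u2‖ ^ 2 := by
    nlinarith [sq_nonneg (‖g‖ * ‖u1‖ - ‖x‖ * ‖u2‖)]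
  have h12 : -((‖x‖ * ‖u1‖) * (‖e‖ * ‖u2‖)) ≤ A * B := by linarith
  have h5 : -(c * ((‖x‖ * ‖u1‖) * (‖g‖ * ‖u2‖))) ≤ A * B := by linarith
  have h6 : c * (2 * ((‖x‖ * ‖u1‖) * (‖g‖ * ‖u2‖)))
      ≤ c * (‖g‖ ^ 2 * ‖u1‖ ^ 2 + ‖x‖ ^ 2 * ‖u2‖ ^ 2) :=
    mul_le_mul_of_nonneg_left h4 hc0
  constructor
  · have hexp : (1 - c) * (‖g‖ ^ 2 * ‖u1‖ ^ 2 + ‖x‖ ^ 2 * ‖u2‖ ^ 2)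
        = ‖g‖ ^ 2 * ‖u1‖ ^ 2 + ‖x‖ ^ 2 * ‖u2‖ ^ 2
          - c * (‖g‖ ^ 2 * ‖u1‖ ^ 2 + ‖x‖ ^ 2 * ‖u2‖ ^ 2) := by ring
    rw [hexp]
    linarith [h5, h6]
  · intro hne
    have hxpos : 0 < ‖x‖ := norm_pos_iff.2 hx
    have : 0 < ‖g‖ ^ 2 * ‖u1‖ ^ 2 + ‖x‖ ^ 2 * ‖u2‖ ^ 2 := by
      rcases not_and_or.1 hne with h | h
      · have : 0 < ‖u1‖ := norm_pos_iff.2 h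
        have := mul_pos hgpos (pow_pos this 2)
        nlinarith [sq_nonneg (‖x‖ * ‖u2‖)]
      · have : 0 < ‖u2‖ := norm_pos_iff.2 h
        have := mul_pos (pow_pos hxpos 2) (pow_pos this 2)
        nlinarith [sq_nonneg (‖g‖ * ‖u1‖)]
    have h1c : 0 < 1 - c := by linarith
    exact mul_pos h1c this
end

section
/- Let z, ζ ∈ ℝᵏ, b, β ∈ ℝʰ, ‖g‖ = ‖b‖ with ‖g‖² ≤ m(1+ρ²) and ‖b^⊥‖ ≤ √m ρ as above, M := (ζ−z)‖g‖b̂ᵀ + ẑ‖z‖(β−b)ᵀ. Then (1/m)‖M‖_F² ≤ (1+ρ)²·Δ(ζ,β) where Δ(ζ,β) := ‖ζ−z‖² + (‖z‖²/m)‖β−b‖². -/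
open scoped BigOperators

set_option maxHeartbeats 800000 in
/-- Upper bound on the Frobenius norm of `M = (ζ−z)‖g‖b̂ᵀ + ẑ‖z‖(β−b)ᵀ`
(whose entries are `(ζᵢ−zᵢ)bⱼ + zᵢ(βⱼ−bⱼ)`):
`(1/m)‖M‖_F² ≤ (1+ρ)²·Δ(ζ,β)` with `Δ(ζ,β) = ‖ζ−z‖² + (‖z‖²/m)‖β−b‖²`. -/
theorem frobenius_M_upper_bound {k h m : ℕ} (hm : 0 < m) (hh : 0 < h)
    (ρ : ℝ) (hρ0 : 0 ≤ ρ) (hρ1 : ρ < 1)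
    (z ζ : EuclideanSpace ℝ (Fin k)) (b β : EuclideanSpace ℝ (Fin h))
    (hb0 : b ⟨0, hh⟩ = Real.sqrt m)
    (hbperp : ∑ j ∈ Finset.univ.erase (⟨0, hh⟩ : Fin h), (b j) ^ 2 ≤ (m : ℝ) * ρ ^ 2)
    (hβ0 : β ⟨0, hh⟩ = b ⟨0, hh⟩) :
    (1 / (m : ℝ)) * ∑ i : Fin k, ∑ j : Fin h, ((ζ i - z i) * b j + z i * (β j - b j)) ^ 2
      ≤ (1 + ρ) ^ 2 * (‖ζ - z‖ ^ 2 + ‖z‖ ^ 2 / m * ‖β - b‖ ^ 2) := by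
  set P := ∑ i : Fin k, (ζ i - z i) ^ 2 with hP
  set Z := ∑ i : Fin k, (z i) ^ 2 with hZ
  set B := ∑ j : Fin h, (b j) ^ 2 with hB
  set Q := ∑ j : Fin h, (β j - b j) ^ 2 with hQ
  set C := ∑ i : Fin k, (ζ i - z i) * z i with hC
  set D := ∑ j : Fin h, b j * (β j - b j) with hD
  have hPnn : 0 ≤ P := Finset.sum_nonneg fun _ _ => sq_nonneg _
  have hZnn : 0 ≤ Z := Finset.sum_nonneg fun _ _ => sq_nonneg _
  have hQnn : 0 ≤ Q := Finset.sum_nonneg fun _ _ => sq_nonneg _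
  have hmpos : (0:ℝ) < m := by exact_mod_cast hm
  -- expand the double sum
  have hexpand : ∑ i : Fin k, ∑ j : Fin h, ((ζ i - z i) * b j + z i * (β j - b j)) ^ 2
      = P * B + 2 * C * D + Z * Q := by
    have h1 : ∀ i : Fin k, ∑ j : Fin h, ((ζ i - z i) * b j + z i * (β j - b j)) ^ 2
        = (ζ i - z i) ^ 2 * B + 2 * ((ζ i - z i) * z i) * D + (z i) ^ 2 * Q := by
      intro i
      rw [hB, hD, hQ, Finset.mul_sum, Finset.mul_sum, Finset.mul_sum,
        ← Finset.sum_add_distrib, ← Finset.sum_add_distrib]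
      exact Finset.sum_congr rfl fun j _ => by ring
    rw [Finset.sum_congr rfl fun i _ => h1 i]
    rw [Finset.sum_add_distrib, Finset.sum_add_distrib, ← Finset.sum_mul, ← Finset.sum_mul,
      ← Finset.sum_mul, ← Finset.mul_sum, ← hP, ← hZ, ← hC]
  -- norms
  have hnormP : ‖ζ - z‖ ^ 2 = P := by
    rw [EuclideanSpace.norm_eq, Real.sq_sqrt (Finset.sum_nonneg fun _ _ => sq_nonneg _)]
    exact Finset.sum_congr rfl fun i _ => by simp [sq_abs]
  have hnormZ : ‖z‖ ^ 2 = Z := by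
    rw [EuclideanSpace.norm_eq, Real.sq_sqrt (Finset.sum_nonneg fun _ _ => sq_nonneg _)]
    exact Finset.sum_congr rfl fun i _ => by simp [sq_abs]
  have hnormQ : ‖β - b‖ ^ 2 = Q := by
    rw [EuclideanSpace.norm_eq, Real.sq_sqrt (Finset.sum_nonneg fun _ _ => sq_nonneg _)]
    exact Finset.sum_congr rfl fun i _ => by simp [sq_abs]
  -- bound on B
  have hBbound : B ≤ m + m * ρ ^ 2 := by
    have hsplit : B = b ⟨0, hh⟩ ^ 2 + ∑ j ∈ Finset.univ.erase (⟨0, hh⟩ : Fin h), (b j) ^ 2 :=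
      (Finset.add_sum_erase Finset.univ (fun j => (b j) ^ 2)
        (Finset.mem_univ (⟨0, hh⟩ : Fin h))).symm
    have hb0sq : (b ⟨0, hh⟩) ^ 2 = m := by
      rw [hb0, Real.sq_sqrt (by positivity)]
    rw [hsplit, hb0sq]
    linarith
  -- Cauchy-Schwarz for C
  have hCbound : C ^ 2 ≤ P * Z :=
    Finset.sum_mul_sq_le_sq_mul_sq Finset.univ (fun i : Fin k => ζ i - z i) (fun i : Fin k => z i)
  -- Cauchy-Schwarz for D, using hβ0 to drop coordinate 0
  have hDerase : D = ∑ j ∈ Finset.univ.erase (⟨0, hh⟩ : Fin h), b j * (β j - b j) := by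
    have hsplit : D = b ⟨0, hh⟩ * (β ⟨0, hh⟩ - b ⟨0, hh⟩)
        + ∑ j ∈ Finset.univ.erase (⟨0, hh⟩ : Fin h), b j * (β j - b j) :=
      (Finset.add_sum_erase Finset.univ (fun j => b j * (β j - b j))
        (Finset.mem_univ (⟨0, hh⟩ : Fin h))).symm
    rw [hsplit, hβ0, sub_self, mul_zero, zero_add]
  have hQerase : ∑ j ∈ Finset.univ.erase (⟨0, hh⟩ : Fin h), (β j - b j) ^ 2 ≤ Q := by
    rw [hQ]
    exact Finset.sum_le_sum_of_subset_of_nonneg (Finset.erase_subset _ _)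
      (fun _ _ _ => sq_nonneg _)
  have hDbound : D ^ 2 ≤ (m * ρ ^ 2) * Q := by
    have hcs := Finset.sum_mul_sq_le_sq_mul_sq (Finset.univ.erase (⟨0, hh⟩ : Fin h))
      (fun j : Fin h => b j) (fun j : Fin h => β j - b j)
    have hSq : 0 ≤ ∑ j ∈ Finset.univ.erase (⟨0, hh⟩ : Fin h), (β j - b j) ^ 2 :=
      Finset.sum_nonneg fun _ _ => sq_nonneg _
    rw [← hDerase] at hcs
    calc D ^ 2 ≤ (∑ j ∈ Finset.univ.erase (⟨0, hh⟩ : Fin h), (b j) ^ 2)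
          * (∑ j ∈ Finset.univ.erase (⟨0, hh⟩ : Fin h), (β j - b j) ^ 2) := hcs
      _ ≤ (m * ρ ^ 2) * Q := mul_le_mul hbperp hQerase hSq (by positivity)
  -- final inequality
  rw [hexpand, hnormP, hnormZ, hnormQ, div_mul_eq_mul_div, one_mul, div_le_iff₀ hmpos]
  have key : P * B + 2 * C * D + Z * Q ≤ (1 + ρ) ^ 2 * (m * P) + (1 + ρ) ^ 2 * (Z * Q) := by
    have h2CD : 2 * C * D ≤ ρ * (m * P + Z * Q) := by
      have hRnn : 0 ≤ ρ * (m * P + Z * Q) := by positivity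
      have hsq : (2 * C * D) ^ 2 ≤ (ρ * (m * P + Z * Q)) ^ 2 := by
        have hprod : C ^ 2 * D ^ 2 ≤ (P * Z) * ((m * ρ ^ 2) * Q) :=
          mul_le_mul hCbound hDbound (sq_nonneg D) (mul_nonneg hPnn hZnn)
        nlinarith [sq_nonneg (ρ * (m * P) - ρ * (Z * Q))]
      calc 2 * C * D ≤ |2 * C * D| := le_abs_self _
        _ = Real.sqrt ((2 * C * D) ^ 2) := (Real.sqrt_sq_eq_abs _).symm
        _ ≤ Real.sqrt ((ρ * (m * P + Z * Q)) ^ 2) := Real.sqrt_le_sqrt hsq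
        _ = |ρ * (m * P + Z * Q)| := Real.sqrt_sq_eq_abs _
        _ = ρ * (m * P + Z * Q) := abs_of_nonneg hRnn
    nlinarith [mul_le_mul_of_nonneg_left hBbound hPnn, mul_nonneg hZnn hQnn,
      mul_nonneg (mul_nonneg hmpos.le hPnn) hρ0, mul_nonneg (mul_nonneg hZnn hQnn) hρ0]
  calc P * B + 2 * C * D + Z * Q
      ≤ (1 + ρ) ^ 2 * (m * P) + (1 + ρ) ^ 2 * (Z * Q) := key
    _ = (1 + ρ) ^ 2 * (P + Z / ↑m * Q) * ↑m := by field_simp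
end
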